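/- In SP_9, for every positive edge uv there exist exactly two vertices z such that uz is positive and vz is negative. -/

import Mathlib

/-- Vertices of `SP_9`, identified with `{0,1,2} × {0,1,2}`. -/
abbrev V9 : Type := Fin 3 × Fin 3

/-- The edge `uv` of `SP_9` is positive: `u ≠ v` and they agree in exactly one coordinate. -/
abbrev pos9 (u v : V9) : Prop :=
  (u.1 = v.1 ∧ u.2 ≠ v.2) ∨ (u.1 ≠ v.1 ∧ u.2 = v.2)

/-- The edge `uv` of `SP_9` is negative: `u ≠ v` and it is not positive. -/
abbrev neg9 (u v : V9) : Prop := u ≠ v ∧ ¬ pos9 u v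

/-!
The positive edges of `SP_9` form the rook's graph `K₃ □ K₃`: two cells are adjacent when they
share a row or a column. If `u` and `v` share a row, a neighbour of `u` in that row is `v` or
adjacent to `v`, while any other cell of the column of `u` is adjacent to `u` and lies on neither
line through `v`. So the vertices sought are the two other cells of the column of `u`.
-/

namespace SimpleGraph

variable {α β : Type*}

theorem setOf_top_boxProd_top_adj_and_compl_adj_of_fst_eq {u v : α × β}
    (h₁ : u.1 = v.1) (h₂ : u.2 ≠ v.2) :
    {z | (⊤ □ ⊤ : SimpleGraph (α × β)).Adj u z ∧ (⊤ □ ⊤)ᶜ.Adj v z} = {u.1}ᶜ ×ˢ {u.2} := by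
  ext z
  simp only [Set.mem_ofPred_eq, compl_adj, boxProd_adj, top_adj, Set.mem_prod, Set.mem_compl_iff,
    Set.mem_singleton_iff, ne_eq]
  grind

theorem setOf_top_boxProd_top_adj_and_compl_adj_of_snd_eq {u v : α × β}
    (h₁ : u.1 ≠ v.1) (h₂ : u.2 = v.2) :
    {z | (⊤ □ ⊤ : SimpleGraph (α × β)).Adj u z ∧ (⊤ □ ⊤)ᶜ.Adj v z} = {u.1} ×ˢ {u.2}ᶜ := by
  ext z
  simp only [Set.mem_ofPred_eq, compl_adj, boxProd_adj, top_adj, Set.mem_prod, Set.mem_compl_iff,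
    Set.mem_singleton_iff, ne_eq]
  grind

end SimpleGraph

open SimpleGraph

theorem pos9_iff_top_boxProd_top_adj (u v : V9) : pos9 u v ↔ (⊤ □ ⊤ : SimpleGraph V9).Adj u v := by
  rw [boxProd_adj, top_adj, top_adj]
  tauto

theorem neg9_iff_top_boxProd_top_compl_adj (u v : V9) :
    neg9 u v ↔ (⊤ □ ⊤ : SimpleGraph V9)ᶜ.Adj u v := by
  rw [compl_adj, ← pos9_iff_top_boxProd_top_adj]

theorem sp9_pos_edge_two_mixed :
    ∀ u v : V9, pos9 u v →
      (Finset.univ.filter (fun z : V9 => pos9 u z ∧ neg9 v z)).card = 2 := by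
  intro u v huv
  rw [← Set.ncard_coe_finset, Finset.coe_filter_univ]
  simp only [pos9_iff_top_boxProd_top_adj, neg9_iff_top_boxProd_top_compl_adj]
  rcases huv with ⟨h₁, h₂⟩ | ⟨h₁, h₂⟩
  · rw [setOf_top_boxProd_top_adj_and_compl_adj_of_fst_eq h₁ h₂, Set.ncard_prod, Set.ncard_compl]
    simp
  · rw [setOf_top_boxProd_top_adj_and_compl_adj_of_snd_eq h₁ h₂, Set.ncard_prod, Set.ncard_compl]
    simp
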